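/- arXiv:1107.3807 — 3 statements merged into one kernel-verified Lean document; each statement's English description precedes it below -/
import Mathlib

section
/- Let A be a commutative ring with 1, let n ≥ 1 be a natural number, and let α, f ∈ A satisfy α^n + f·α + f = 0. Then α + 1 is a unit in A. -/
theorem isUnit_add_one_of_dvd_pow {A : Type*} [CommRing A] {α : A} {n : ℕ}
    (hdvd : α + 1 ∣ α ^ n) : IsUnit (α + 1) :=
  ((IsCoprime.add_one_left_of_dvd dvd_rfl).pow_right : IsCoprime (α + 1) (α ^ n)).isUnit_of_dvd hdvd

theorem stmt0_general {A : Type*} [CommRing A] (n : ℕ) (α f : A)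
    (h : α ^ n + f * α + f = 0) : IsUnit (α + 1) :=
  isUnit_add_one_of_dvd_pow ⟨-f, by linear_combination h⟩

/-- If `α^n + f*α + f = 0` in a commutative ring with `n ≥ 1`, then `α + 1` is a unit. -/
theorem stmt0 {A : Type*} [CommRing A] (n : ℕ) (hn : 1 ≤ n) (α f : A)
    (h : α ^ n + f * α + f = 0) : IsUnit (α + 1) :=
  stmt0_general n α f h
end

section
/- Let S be an integral domain with fraction field L, and let v : Lˣ → ℤ be a valuation (i.e., v(xy) = v(x) + v(y) and v(x+y) ≥ min(v(x), v(y))) such that v(s) ≥ 0 for all nonzero s ∈ S. Suppose α, f ∈ S are nonzero, n ≥ 1, and α^n + f·α + f = 0. Then v(f) = n·v(α). -/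
/-- If `S` is a domain with fraction field `L`, `v` a valuation on `L` nonnegative on `S`,
and `α^n + f·α + f = 0` with `α, f ≠ 0` and `n ≥ 1`, then `v(f) = n·v(α)`. -/
theorem stmt1 {S : Type*} [CommRing S] [IsDomain S]
    (L : Type*) [Field L] [Algebra S L] [IsFractionRing S L]
    (v : L → ℤ)
    (hmul : ∀ x y : L, x ≠ 0 → y ≠ 0 → v (x * y) = v x + v y)
    (hadd : ∀ x y : L, x ≠ 0 → y ≠ 0 → x + y ≠ 0 → min (v x) (v y) ≤ v (x + y))
    (hS : ∀ s : S, s ≠ 0 → 0 ≤ v (algebraMap S L s))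
    (α f : S) (hα : α ≠ 0) (hf : f ≠ 0) (n : ℕ) (hn : 1 ≤ n)
    (h : α ^ n + f * α + f = 0) :
    v (algebraMap S L f) = (n : ℤ) * v (algebraMap S L α) := by
  have hinj : Function.Injective (algebraMap S L) := IsFractionRing.injective S L
  set A : L := algebraMap S L α with hA
  set F : L := algebraMap S L f with hF
  have hA0 : A ≠ 0 := fun h0 => hα (hinj (by rw [map_zero]; exact h0))
  have hF0 : F ≠ 0 := fun h0 => hf (hinj (by rw [map_zero]; exact h0))
  -- relation in L
  have hrel : A ^ n + F * A + F = 0 := by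
    have := congrArg (algebraMap S L) h
    simpa [map_add, map_mul, map_pow] using this
  have hv1 : v 1 = 0 := by
    have := hmul 1 1 one_ne_zero one_ne_zero
    simpa using this.symm
  have hvneg1 : v (-1 : L) = 0 := by
    have := hmul (-1) (-1) (by norm_num) (by norm_num)
    simp only [neg_mul, one_mul, neg_neg, hv1] at this
    omega
  have hvneg : ∀ x : L, x ≠ 0 → v (-x) = v x := by
    intro x hx
    have := hmul (-1) x (by norm_num) hx
    simpa [hvneg1] using this
  have hvpow : ∀ x : L, x ≠ 0 → ∀ m : ℕ, v (x ^ m) = m * v x := by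
    intro x hx m
    induction m with
    | zero => simpa using hv1
    | succ k ih =>
      have := hmul (x ^ k) x (pow_ne_zero k hx) hx
      rw [pow_succ, this, ih]
      push_cast
      ring
  -- A + 1 ≠ 0
  have hA1 : A + 1 ≠ 0 := by
    intro h0
    have hAeq : A = -1 := by linear_combination h0
    rw [hAeq] at hrel
    have : ((-1 : L)) ^ n ≠ 0 := pow_ne_zero n (by norm_num)
    apply this
    linear_combination hrel
  -- F * (A + 1) = -(A ^ n)
  have hkey : F * (A + 1) = -(A ^ n) := by linear_combination hrel
  have hvsum : v F + v (A + 1) = (n : ℤ) * v A := by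
    have h1 := hmul F (A + 1) hF0 hA1
    rw [hkey] at h1
    rw [hvneg _ (pow_ne_zero n hA0), hvpow A hA0 n] at h1
    omega
  -- α + 1 in S maps to A + 1
  have hα1 : (α + 1 : S) ≠ 0 := by
    intro h0
    apply hA1
    have := congrArg (algebraMap S L) h0
    simpa [map_add] using this
  have hvA1 : 0 ≤ v (A + 1) := by
    have := hS (α + 1) hα1
    simpa [map_add] using this
  have hvA : 0 ≤ v A := hS α hα
  have hvF : 0 ≤ v F := hS f hf
  -- min(v(A+1), v(-A)) ≤ v 1 = 0
  have hmin : min (v (A + 1)) (v A) ≤ 0 := by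
    have hadd' := hadd (A + 1) (-A) hA1 (neg_ne_zero.mpr hA0) (by simp)
    rw [hvneg A hA0] at hadd'
    have : (A + 1) + -A = 1 := by ring
    rw [this, hv1] at hadd'
    exact hadd'
  rcases le_min_iff.not.mp (by omega : ¬ 1 ≤ min (v (A + 1)) (v A)) with _
  rcases lt_or_ge (v (A+1)) 1 with h1 | h1
  · have : v (A + 1) = 0 := by omega
    omega
  · have h2 : v A = 0 := by
      have := min_le_right (v (A+1)) (v A)
      omega
    rw [h2] at hvsum ⊢
    simp at hvsum ⊢
    omega
end

section
/- Let R be a Noetherian integrally closed domain with fraction field K of characteristic p > 0, and let f ∈ R be a nonzero nonunit. Let n ≥ 1 be an integer divisible by p. Then there exists a finite separable field extension L/K and an element α of the integral closure S of R in L such that α^n + f·α + f = 0 and α + 1 is a unit in S; consequently n·v(α) = v(f) for every valuation v on L nonnegative on S. -/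
/-- Affine algebraic content of Lemma 4.4: for a Noetherian integrally closed domain `R`
with fraction field `K` of characteristic `p > 0`, a nonzero nonunit `f ∈ R`, and `n ≥ 1`
divisible by `p`, there is a finite separable extension `L/K` (realized inside an algebraic
closure of `K`) and an element `α` of the integral closure `S` of `R` in `L` with
`α^n + f·α + f = 0` and `α + 1` a unit in `S`; consequently `n·v(α) = v(f)` for every
valuation `v` on `L` nonnegative on `S`. -/
theorem stmt13 {R K : Type*} [CommRing R] [IsDomain R] [IsNoetherianRing R]
    [IsIntegrallyClosed R] [Field K] [Algebra R K] [IsFractionRing R K]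
    (p : ℕ) [Fact p.Prime] [CharP K p]
    (f : R) (hf : f ≠ 0) (hfu : ¬ IsUnit f)
    (n : ℕ) (hn : 1 ≤ n) (hpn : p ∣ n) :
    ∃ L : IntermediateField K (AlgebraicClosure K),
      FiniteDimensional K L ∧ Algebra.IsSeparable K L ∧
      ∃ α : AlgebraicClosure K, α ∈ L ∧ IsIntegral R α ∧
        α ^ n + algebraMap R (AlgebraicClosure K) f * α
          + algebraMap R (AlgebraicClosure K) f = 0 ∧
        (∃ β : AlgebraicClosure K, β ∈ L ∧ IsIntegral R β ∧ (α + 1) * β = 1) ∧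
        ∀ v : AlgebraicClosure K → ℤ,
          (∀ x y : AlgebraicClosure K, x ≠ 0 → y ≠ 0 → v (x * y) = v x + v y) →
          (∀ x y : AlgebraicClosure K, x ≠ 0 → y ≠ 0 → x + y ≠ 0 →
            min (v x) (v y) ≤ v (x + y)) →
          (∀ s : AlgebraicClosure K, s ∈ L → IsIntegral R s → s ≠ 0 → 0 ≤ v s) →
          (n : ℤ) * v α = v (algebraMap R (AlgebraicClosure K) f) := by
  classical
  set AC := AlgebraicClosure K
  set F : K := algebraMap R K f with hFdef
  have hF : F ≠ 0 := fun h => hf ((map_eq_zero_iff _ (IsFractionRing.injective R K)).mp h)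
  have hn2 : 2 ≤ n := le_trans (Fact.out : p.Prime).two_le (Nat.le_of_dvd hn hpn)
  set P : Polynomial K := Polynomial.X ^ n + Polynomial.C F * Polynomial.X + Polynomial.C F with hPdef
  have hdeglin : (Polynomial.C F * Polynomial.X + Polynomial.C F).degree < (Polynomial.X ^ n : Polynomial K).degree := by
    rw [Polynomial.degree_X_pow]
    refine lt_of_le_of_lt (Polynomial.degree_linear_le) ?_
    exact_mod_cast Nat.lt_of_lt_of_le one_lt_two hn2
  have hPmonic : P.Monic := by
    rw [hPdef, add_assoc]
    exact (Polynomial.monic_X_pow n).add_of_left hdeglin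
  have hPdeg : P.degree = n := by
    rw [hPdef, add_assoc, Polynomial.degree_add_eq_left_of_degree_lt hdeglin,
      Polynomial.degree_X_pow]
  obtain ⟨α, hroot⟩ := IsAlgClosed.exists_aeval_eq_zero AC P
    (by rw [hPdeg]; exact_mod_cast (by omega : n ≠ 0) ∘ Nat.cast_injective.eq_iff.mp)
  set Ff : AC := algebraMap R AC f with hFfdef
  have hFfF : Ff = algebraMap K AC F := by
    rw [hFfdef, hFdef, IsScalarTower.algebraMap_apply R K AC]
  have hFf : Ff ≠ 0 := by
    rw [hFfF]
    exact fun h => hF ((map_eq_zero_iff _ (algebraMap K AC).injective).mp h)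
  have heq : α ^ n + Ff * α + Ff = 0 := by
    have := hroot
    simp only [hPdef, map_add, map_mul, map_pow, Polynomial.aeval_X, Polynomial.aeval_C] at this
    rw [hFfF]; exact this
  have hderiv : Polynomial.derivative P = Polynomial.C F := by
    have hnK : (n : K) = 0 := (CharP.cast_eq_zero_iff K p n).mpr hpn
    simp [hPdef, Polynomial.derivative_X_pow, hnK]
  have hPsep : P.Separable := by
    rw [Polynomial.Separable, hderiv]
    exact ⟨0, Polynomial.C F⁻¹, by simp [← Polynomial.C_mul, inv_mul_cancel₀ hF]⟩
  have hintK : IsIntegral K α := ⟨P, hPmonic, hroot⟩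
  have hsepα : IsSeparable K α := hPsep.of_dvd (minpoly.dvd K α hroot)
  set Lf := IntermediateField.adjoin K {α} with hLf
  have hαL : α ∈ Lf := IntermediateField.mem_adjoin_simple_self K α
  -- integrality of α over R
  have hintα : IsIntegral R α := by
    refine ⟨Polynomial.X ^ n + Polynomial.C f * Polynomial.X + Polynomial.C f, ?_, ?_⟩
    · rw [add_assoc]
      refine (Polynomial.monic_X_pow n).add_of_left ?_
      rw [Polynomial.degree_X_pow]
      refine lt_of_le_of_lt (Polynomial.degree_linear_le) ?_
      exact_mod_cast Nat.lt_of_lt_of_le one_lt_two hn2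
    · simp only [Polynomial.eval₂_add, Polynomial.eval₂_mul, Polynomial.eval₂_pow,
        Polynomial.eval₂_X, Polynomial.eval₂_C]
      exact heq
  -- the inverse of α + 1
  set Sg : AC := ∑ i ∈ Finset.range n, α ^ i * (-1 : AC) ^ (n - 1 - i) with hSg
  have hgeom : Sg * (α + 1) = α ^ n - (-1) ^ n := by
    have := geom_sum₂_mul α (-1 : AC) n
    rw [hSg]
    simpa [sub_neg_eq_add] using this
  set β : AC := (-1 : AC) ^ (n + 1) * (Sg + Ff) with hβ
  have hαpow : α ^ n = -(Ff * (α + 1)) := by linear_combination heq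
  have hx : ((-1 : AC) ^ n) * ((-1 : AC) ^ n) = 1 := by
    rw [← mul_pow]; norm_num
  have hkey : (α + 1) * β = 1 := by
    have h1 : (α + 1) * β
        = (-1 : AC) ^ (n + 1) * (Sg * (α + 1)) + (-1) ^ (n + 1) * (Ff * (α + 1)) := by
      rw [hβ]; ring
    rw [h1, hgeom, hαpow, pow_succ]
    linear_combination hx
  have hβint : IsIntegral R β := by
    have h1 : Sg ∈ integralClosure R AC := by
      refine sum_mem fun i _ => mul_mem (pow_mem ?_ i) (pow_mem (neg_mem (one_mem _)) _)
      exact hintα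
    have h2 : Ff ∈ integralClosure R AC := isIntegral_algebraMap
    exact mul_mem (pow_mem (neg_mem (one_mem _)) _) (add_mem h1 h2)
  have hβL : β ∈ Lf := by
    refine mul_mem (pow_mem (neg_mem (one_mem _)) _) (add_mem ?_ ?_)
    · exact sum_mem fun i _ => mul_mem (pow_mem hαL i) (pow_mem (neg_mem (one_mem _)) _)
    · rw [hFfF]; exact Lf.algebraMap_mem F
  refine ⟨Lf, IntermediateField.adjoin.finiteDimensional hintK,
    (IntermediateField.isSeparable_adjoin_simple_iff_isSeparable K AC).mpr hsepα, α,
    hαL, hintα, heq, ⟨β, hβL, hβint, hkey⟩, ?_⟩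
  -- valuation computation
  intro v hmul hmin hpos
  have hα0 : α ≠ 0 := by
    intro h
    apply hFf
    rw [h] at heq
    simpa [zero_pow (by omega : n ≠ 0)] using heq
  have hα1 : α + 1 ≠ 0 := left_ne_zero_of_mul_eq_one hkey
  have hβ0 : β ≠ 0 := right_ne_zero_of_mul_eq_one hkey
  have hv1 : v 1 = 0 := by
    have h := hmul 1 1 one_ne_zero one_ne_zero
    rw [one_mul] at h; omega
  have hvneg1 : v (-1) = 0 := by
    have h := hmul (-1) (-1) (by norm_num) (by norm_num)
    rw [neg_mul_neg, one_mul] at h; omega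
  have hpow : ∀ m : ℕ, v (α ^ m) = m * v α := by
    intro m
    induction m with
    | zero => simpa using hv1
    | succ k ih =>
      rw [pow_succ, hmul _ _ (pow_ne_zero k hα0) hα0, ih]
      push_cast; ring
  have hvα1 : v (α + 1) = 0 := by
    have h2 : v ((α + 1) * β) = v (α + 1) + v β := hmul _ _ hα1 hβ0
    rw [hkey, hv1] at h2
    have g1 := hpos (α + 1) (add_mem hαL (one_mem _)) (hintα.add isIntegral_one) hα1
    have g2 := hpos β hβL hβint hβ0
    omega
  have hfin : α ^ n = (-1) * (Ff * (α + 1)) := by linear_combination heq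
  have h3 : v (α ^ n) = v (-1) + (v Ff + v (α + 1)) := by
    rw [hfin, hmul _ _ (by norm_num) (mul_ne_zero hFf hα1), hmul _ _ hFf hα1]
  rw [hpow n, hvneg1, hvα1] at h3
  omega
end
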